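/- arXiv:1410.4887 — 4 statements merged into one kernel-verified Lean document; each statement's English description precedes it below -/
import Mathlib

section
/- Let (X,μ,S,T) be a measure preserving system with commuting transformations S and T such that for all nonzero integers i and j, μ({x : S^i x = x}) = 0 and μ({x : T^j x = x}) = 0. Let S* = id×S×id×S and T* = id×id×T×T acting on X⁴. Then μ_{S,T}({(x0,x1,x2,x3) ∈ X⁴ : (S*)^i (T*)^j (x0,x1,x2,x3) ≠ (x0,x1,x2,x3) for every (i,j) ≠ (0,0)}) = 1. -/
/-!
Testing the defining identities of the joinings against a function of one coordinate (and `1`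
elsewhere) shows that both marginals of `μ_S` are `μ`, hence so are the second and third
marginals of `μ_{S,T}`.
Since `(S*)^i (T*)^j` moves the second coordinate by `S^i` and the third by `T^j`, a point with
nontrivial stabilizer has its second coordinate fixed by some `S^i`, `i ≠ 0`, or its third
coordinate fixed by some `T^j`, `j ≠ 0`; both happen on countably many null sets.
-/

open MeasureTheory

/-- The σ-algebra of `R`-invariant measurable sets. -/
def invSigma {X : Type*} [MeasurableSpace X] (R : X → X) : MeasurableSpace X where
  MeasurableSet' s := MeasurableSet s ∧ R ⁻¹' s = s
  measurableSet_empty := ⟨MeasurableSet.empty, rfl⟩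
  measurableSet_compl s hs := ⟨hs.1.compl, by rw [Set.preimage_compl, hs.2]⟩
  measurableSet_iUnion f hf := ⟨MeasurableSet.iUnion fun i => (hf i).1, by
    rw [Set.preimage_iUnion]; exact Set.iUnion_congr fun i => (hf i).2⟩

/-- `μ2` is the relatively independent self-joining of `μ` over `I_R`. -/
def IsRelIndJoining {X : Type*} [MeasurableSpace X] (μ : Measure X) (R : X → X)
    (μ2 : Measure (X × X)) : Prop :=
  ∀ f0 f1 : X → ℝ, Measurable f0 → Measurable f1 →
    (∃ C, ∀ x, |f0 x| ≤ C) → (∃ C, ∀ x, |f1 x| ≤ C) →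
    ∫ p, f0 p.1 * f1 p.2 ∂μ2 =
      ∫ x, (μ[f0 | invSigma R]) x * (μ[f1 | invSigma R]) x ∂μ

/-- `μ4` is the relatively independent self-joining of `μ2` over `I_{T×T}`. -/
def IsHostJoining {X : Type*} [MeasurableSpace X] (μ2 : Measure (X × X)) (T : X → X)
    (μ4 : Measure (X × X × X × X)) : Prop :=
  ∀ f0 f1 f2 f3 : X → ℝ, Measurable f0 → Measurable f1 → Measurable f2 → Measurable f3 →
    (∃ C, ∀ x, |f0 x| ≤ C) → (∃ C, ∀ x, |f1 x| ≤ C) →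
    (∃ C, ∀ x, |f2 x| ≤ C) → (∃ C, ∀ x, |f3 x| ≤ C) →
    ∫ p, f0 p.1 * f1 p.2.1 * f2 p.2.2.1 * f3 p.2.2.2 ∂μ4 =
      ∫ q, (μ2[(fun r => f0 r.1 * f1 r.2) | invSigma (Prod.map T T)]) q *
           (μ2[(fun r => f2 r.1 * f3 r.2) | invSigma (Prod.map T T)]) q ∂μ2

/-- The permutation `S* = id × S × id × S` of `X⁴`. -/
def sideS {X : Type*} (S : X ≃ X) : Equiv.Perm (X × X × X × X) :=
  (Equiv.refl X).prodCongr (S.prodCongr ((Equiv.refl X).prodCongr S))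

/-- The permutation `T* = id × id × T × T` of `X⁴`. -/
def sideT {X : Type*} (T : X ≃ X) : Equiv.Perm (X × X × X × X) :=
  (Equiv.refl X).prodCongr ((Equiv.refl X).prodCongr (T.prodCongr T))

lemma abs_indicator_one_le_one {Z : Type*} (A : Set Z) (z : Z) :
    |A.indicator (1 : Z → ℝ) z| ≤ 1 := by
  by_cases hz : z ∈ A <;> simp [hz]

lemma abs_one_le_one {X : Type*} (x : X) : |(fun _ => (1 : ℝ)) x| ≤ 1 := by
  simp

namespace MeasureTheory

variable {Y Z : Type*} [MeasurableSpace Y] [MeasurableSpace Z]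

lemma Measure.ext_of_integral_eq_of_bounded {ν μ : Measure Z} [IsProbabilityMeasure μ]
    (h : ∀ g : Z → ℝ, Measurable g → (∃ C, ∀ z, |g z| ≤ C) → ∫ z, g z ∂ν = ∫ z, g z ∂μ) :
    ν = μ := by
  have hreal : ∀ A, MeasurableSet A → ν.real A = μ.real A := fun A hA => by
    simpa only [integral_indicator_one hA] using
      h _ (measurable_one.indicator hA) ⟨1, abs_indicator_one_le_one A⟩
  have : IsProbabilityMeasure ν :=
    ⟨(ENNReal.toReal_eq_one_iff _).1 ((hreal _ .univ).trans probReal_univ)⟩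
  ext A hA
  exact (measureReal_eq_measureReal_iff).1 (hreal A hA)

lemma MeasurePreserving.isProbabilityMeasure {ν : Measure Y} {μ : Measure Z}
    [IsProbabilityMeasure μ] {π : Y → Z} (hπ : MeasurePreserving π ν μ) :
    IsProbabilityMeasure ν :=
  ⟨by rw [← Set.preimage_univ (f := π), hπ.measure_preimage MeasurableSet.univ.nullMeasurableSet,
    measure_univ]⟩

lemma measurePreserving_of_integral_comp_eq {ν : Measure Y} {μ : Measure Z}
    [IsProbabilityMeasure μ] {π : Y → Z} (hπ : Measurable π)
    (h : ∀ g : Z → ℝ, Measurable g → (∃ C, ∀ z, |g z| ≤ C) → ∫ y, g (π y) ∂ν = ∫ z, g z ∂μ) :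
    MeasurePreserving π ν μ :=
  ⟨hπ, Measure.ext_of_integral_eq_of_bounded fun g hg hgb => by
    rw [integral_map hπ.aemeasurable hg.aestronglyMeasurable]
    exact h g hg hgb⟩

end MeasureTheory

section Joinings

variable {X : Type*} [MeasurableSpace X] {g : X → ℝ}

lemma invSigma_le (R : X → X) : invSigma R ≤ ‹MeasurableSpace X› :=
  fun _ hs => hs.1

namespace IsRelIndJoining

variable {μ : Measure X} [IsFiniteMeasure μ] {R : X → X} {μ2 : Measure (X × X)}

lemma integral_comp_fst (h : IsRelIndJoining μ R μ2) (hg : Measurable g)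
    (hgb : ∃ C, ∀ x, |g x| ≤ C) : ∫ p, g p.1 ∂μ2 = ∫ x, g x ∂μ := by
  have := h g (fun _ => 1) hg measurable_const hgb ⟨1, abs_one_le_one⟩
  simp only [mul_one, condExp_const (invSigma_le R) (1 : ℝ)] at this
  rw [this, integral_condExp (invSigma_le R)]

lemma integral_comp_snd (h : IsRelIndJoining μ R μ2) (hg : Measurable g)
    (hgb : ∃ C, ∀ x, |g x| ≤ C) : ∫ p, g p.2 ∂μ2 = ∫ x, g x ∂μ := by
  have := h (fun _ => 1) g measurable_const hg ⟨1, abs_one_le_one⟩ hgb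
  simp only [one_mul, condExp_const (invSigma_le R) (1 : ℝ)] at this
  rw [this, integral_condExp (invSigma_le R)]

end IsRelIndJoining

lemma IsRelIndJoining.isProbabilityMeasure {μ : Measure X} [IsProbabilityMeasure μ] {R : X → X}
    {μ2 : Measure (X × X)} (h : IsRelIndJoining μ R μ2) : IsProbabilityMeasure μ2 :=
  (measurePreserving_of_integral_comp_eq measurable_fst fun _ hg hgb =>
    h.integral_comp_fst hg hgb).isProbabilityMeasure

namespace IsHostJoining

variable {μ2 : Measure (X × X)} [IsFiniteMeasure μ2] {T : X → X}
  {μ4 : Measure (X × X × X × X)}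

lemma integral_comp_snd_fst (h : IsHostJoining μ2 T μ4) (hg : Measurable g)
    (hgb : ∃ C, ∀ x, |g x| ≤ C) : ∫ p, g p.2.1 ∂μ4 = ∫ r, g r.2 ∂μ2 := by
  have := h _ g _ _ measurable_const hg measurable_const measurable_const
    ⟨1, abs_one_le_one⟩ hgb ⟨1, abs_one_le_one⟩ ⟨1, abs_one_le_one⟩
  simp only [one_mul, mul_one, condExp_const (invSigma_le (Prod.map T T))] at this
  rw [this, integral_condExp (invSigma_le _)]

lemma integral_comp_snd_snd_fst (h : IsHostJoining μ2 T μ4) (hg : Measurable g)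
    (hgb : ∃ C, ∀ x, |g x| ≤ C) : ∫ p, g p.2.2.1 ∂μ4 = ∫ r, g r.1 ∂μ2 := by
  have := h _ _ g _ measurable_const measurable_const hg measurable_const
    ⟨1, abs_one_le_one⟩ ⟨1, abs_one_le_one⟩ hgb ⟨1, abs_one_le_one⟩
  simp only [one_mul, mul_one, condExp_const (invSigma_le (Prod.map T T))] at this
  rw [this, integral_condExp (invSigma_le _)]

end IsHostJoining

end Joinings

def sideSHom (X : Type*) : Equiv.Perm X →* Equiv.Perm (X × X × X × X) where
  toFun := sideS
  map_one' := rfl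
  map_mul' _ _ := rfl

def sideTHom (X : Type*) : Equiv.Perm X →* Equiv.Perm (X × X × X × X) where
  toFun := sideT
  map_one' := rfl
  map_mul' _ _ := rfl

lemma sideS_zpow_sideT_zpow_apply {X : Type*} (S T : Equiv.Perm X) (i j : ℤ) (p : X × X × X × X) :
    (sideS S ^ i) ((sideT T ^ j) p) =
      (p.1, (S ^ i) p.2.1, (T ^ j) p.2.2.1, (S ^ i) ((T ^ j) p.2.2.2)) := by
  change (sideSHom X S ^ i) ((sideTHom X T ^ j) p) = _
  rw [← map_zpow, ← map_zpow]
  rfl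

lemma ae_zpow_apply_ne_self {X : Type*} [MeasurableSpace X] {μ : Measure X} {e : Equiv.Perm X}
    (h : ∀ i : ℤ, i ≠ 0 → μ {x | (e ^ i) x = x} = 0) :
    ∀ᵐ x ∂μ, ∀ i : ℤ, i ≠ 0 → (e ^ i) x ≠ x :=
  ae_all_iff.2 fun i => by
    by_cases hi : i = 0
    · simp [hi]
    · filter_upwards [measure_eq_zero_iff_ae_notMem.1 (h i hi)] with x hx _ using hx

theorem hostMeasure_free_set_full_general {X : Type*} [MeasurableSpace X]
    (μ : Measure X) [IsProbabilityMeasure μ]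
    (S T : X ≃ᵐ X)
    (hSfix : ∀ i : ℤ, i ≠ 0 → μ {x | (S.toEquiv ^ i) x = x} = 0)
    (hTfix : ∀ j : ℤ, j ≠ 0 → μ {x | (T.toEquiv ^ j) x = x} = 0)
    (μS : Measure (X × X)) (hμS : IsRelIndJoining μ ⇑S μS)
    (μST : Measure (X × X × X × X)) (hμST : IsHostJoining μS ⇑T μST) :
    μST {p : X × X × X × X | ∀ i j : ℤ, ¬(i = 0 ∧ j = 0) →
      (sideS S.toEquiv ^ i) ((sideT T.toEquiv ^ j) p) ≠ p} = 1 := by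
  have : IsProbabilityMeasure μS := hμS.isProbabilityMeasure
  have h1 : MeasurePreserving (fun p : X × X × X × X => p.2.1) μST μ :=
    measurePreserving_of_integral_comp_eq (by fun_prop) fun _ hg hgb =>
      (hμST.integral_comp_snd_fst hg hgb).trans (hμS.integral_comp_snd hg hgb)
  have h2 : MeasurePreserving (fun p : X × X × X × X => p.2.2.1) μST μ :=
    measurePreserving_of_integral_comp_eq (by fun_prop) fun _ hg hgb =>
      (hμST.integral_comp_snd_snd_fst hg hgb).trans (hμS.integral_comp_fst hg hgb)
  have : IsProbabilityMeasure μST := h1.isProbabilityMeasure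
  have hfree : ∀ᵐ p ∂μST, ∀ i j : ℤ, ¬(i = 0 ∧ j = 0) →
      (sideS S.toEquiv ^ i) ((sideT T.toEquiv ^ j) p) ≠ p := by
    filter_upwards [h1.quasiMeasurePreserving.ae (ae_zpow_apply_ne_self hSfix),
      h2.quasiMeasurePreserving.ae (ae_zpow_apply_ne_self hTfix)] with p hS hT i j hij hfix
    rw [sideS_zpow_sideT_zpow_apply] at hfix
    by_cases hj : j = 0
    · exact hS i (fun hi => hij ⟨hi, hj⟩) congr($hfix.2.1)
    · exact hT j hj congr($hfix.2.2.1)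
  refine (measure_congr (ae_eq_univ.2 ?_)).trans measure_univ
  exact measure_eq_zero_iff_ae_notMem.2 (hfree.mono fun _ hp hc => hc hp)

/-- if for all nonzero `i, j` the fixed point sets of `S^i` and `T^j` are null,
then `μ_{S,T}`-a.e. point of `X⁴` has trivial stabilizer for the `(S*, T*)`-action. -/
theorem hostMeasure_free_set_full {X : Type*} [MeasurableSpace X]
    (μ : Measure X) [IsProbabilityMeasure μ]
    (S T : X ≃ᵐ X) (hS : MeasurePreserving S μ μ) (hT : MeasurePreserving T μ μ)
    (hcomm : ∀ x, S (T x) = T (S x))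
    (hSfix : ∀ i : ℤ, i ≠ 0 → μ {x | (S.toEquiv ^ i) x = x} = 0)
    (hTfix : ∀ j : ℤ, j ≠ 0 → μ {x | (T.toEquiv ^ j) x = x} = 0)
    (μS : Measure (X × X)) (hμS : IsRelIndJoining μ ⇑S μS)
    (μST : Measure (X × X × X × X)) (hμST : IsHostJoining μS ⇑T μST) :
    μST {p : X × X × X × X | ∀ i j : ℤ, ¬(i = 0 ∧ j = 0) →
      (sideS S.toEquiv ^ i) ((sideT T.toEquiv ^ j) p) ≠ p} = 1 :=
  hostMeasure_free_set_full_general μ S T hSfix hTfix μS hμS μST hμST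
end

section
/- Let (X,μ,S,T) be an ergodic measure preserving system with commuting transformations S and T. Then for every A ∈ I_T (a T-invariant measurable set) and every B ∈ I_S (an S-invariant measurable set), μ(A ∩ B) = μ(A) · μ(B). -/
/-!
Let `g = 𝔼[1_A | I_S]`. Being `I_S`-measurable, `g` is `S`-invariant. Since `T` commutes with `S`
it preserves `I_S`, so `T`-invariance of `A` makes `g` a.e. `T`-invariant. Ergodicity of the
joint action says exactly that `T` is ergodic on the factor `(X, I_S, μ)`, hence `g` is a.e.
constant, necessarily equal to `μ A`, and for `B ∈ I_S` we get `μ (A ∩ B) = ∫_B g = μ A * μ B`.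
-/

open MeasureTheory MeasurableSpace Function Set

section
variable {X : Type*} {m : MeasurableSpace X} [mX : MeasurableSpace X] {μ : Measure X}

theorem MeasureTheory.MeasurePreserving.condExp_comp_ae_eq (hm : m ≤ mX)
    [SigmaFinite (μ.trim hm)] {T : X ≃ᵐ X}
    (hT : MeasurePreserving T μ μ) (hTm : Measurable[m, m] T) (hTm' : Measurable[m, m] T.symm)
    {f : X → ℝ} (hf : Integrable f μ) :
    μ[f ∘ T | m] =ᵐ[μ] μ[f | m] ∘ T := by
  have hcomp {g : X → ℝ} : Integrable (g ∘ T) μ ↔ Integrable g μ :=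
    hT.integrable_comp_emb T.measurableEmbedding
  refine (ae_eq_condExp_of_forall_setIntegral_eq hm (hcomp.mpr hf)
    (fun s _ _ => (hcomp.mpr integrable_condExp).integrableOn) (fun s hs _ => ?_) ?_).symm
  · have hs' : T ⁻¹' (T.symm ⁻¹' s) = s := by ext; simp
    simp only [comp_apply]
    rw [← hs', hT.setIntegral_preimage_emb T.measurableEmbedding,
      hT.setIntegral_preimage_emb T.measurableEmbedding, setIntegral_condExp hm hf (hTm' hs)]
  · exact (stronglyMeasurable_condExp.comp_measurable hTm).aestronglyMeasurable

theorem ergodic_trim_invariants [IsProbabilityMeasure μ] {S T : X → X}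
    (hT : MeasurePreserving T μ μ) (hcomm : Function.Commute S T)
    (herg : ∀ s, MeasurableSet s → S ⁻¹' s = s → T ⁻¹' s = s → μ s = 0 ∨ μ s = 1) :
    Ergodic (m := invariants S) T (μ.trim (invariants_le S)) := by
  have hTm : Measurable[invariants S, invariants S] T :=
    measurable_invariants_of_semiconj hT.measurable hcomm.symm
  refine @Ergodic.mk X (invariants S) T _
    (@MeasurePreserving.mk X X (invariants S) (invariants S) T _ _ hTm ?_)
    (@PreErgodic.mk X (invariants S) T _ fun s hs hTs => ?_)
  · refine @Measure.ext _ (invariants S) _ _ fun s hs => ?_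
    rw [Measure.map_apply hTm hs, trim_measurableSet_eq _ hs, trim_measurableSet_eq _ (hTm hs),
      hT.measure_preimage hs.1.nullMeasurableSet]
  · rw [Filter.eventuallyConst_set', ae_eq_empty, ae_eq_univ_iff_measure_eq hs.nullMeasurableSet,
      trim_measurableSet_eq _ hs, trim_measurableSet_eq _ MeasurableSet.univ, measure_univ]
    exact herg s hs.1 hs.2 hTs

theorem exists_ae_eq_const_of_ergodic_trim (hm : m ≤ mX) {T : X → X}
    (herg : Ergodic (m := m) T (μ.trim hm)) {g : X → ℝ} (hg : StronglyMeasurable[m] g)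
    (hgT : g ∘ T =ᵐ[μ] g) : ∃ c, g =ᵐ[μ] const X c := by
  -- make `m` the instance, so that `Ergodic` lemmas apply on the factor
  let _ : MeasurableSpace X := m
  have hgT' := (hg.comp_measurable herg.measurable).ae_eq_trim_of_stronglyMeasurable hm hg hgT
  obtain ⟨c, hc⟩ := herg.ae_eq_const_of_ae_eq_comp₀ hg.measurable.nullMeasurable hgT'
  exact ⟨c, ae_eq_of_ae_eq_trim hc⟩

theorem measure_inter_eq_mul_of_condExp_indicator_ae_eq_const [IsProbabilityMeasure μ]
    (hm : m ≤ mX) {A B : Set X} (hA : MeasurableSet A) (hB : MeasurableSet[m] B) {c : ℝ}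
    (hc : μ[A.indicator 1 | m] =ᵐ[μ] const X c) : μ (A ∩ B) = μ A * μ B := by
  have hint : Integrable (A.indicator (1 : X → ℝ)) μ := (integrable_const 1).indicator hA
  have hcA : c = μ.real A := by
    rw [← integral_indicator_one hA, ← integral_condExp hm, integral_congr_ae hc]
    simp
  have key : μ.real (A ∩ B) = μ.real A * μ.real B := by
    calc μ.real (A ∩ B) = ∫ x in B, A.indicator 1 x ∂μ := by
          rw [integral_indicator_one hA, measureReal_restrict_apply hA]
      _ = ∫ x in B, μ[A.indicator 1 | m] x ∂μ := (setIntegral_condExp hm hint hB).symm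
      _ = μ.real A * μ.real B := by
          rw [setIntegral_congr_ae (hm B hB) (hc.mono fun x hx _ => hx), hcA]
          simp [mul_comm]
  rwa [measureReal_def, measureReal_def, measureReal_def, ← ENNReal.toReal_mul,
    ENNReal.toReal_eq_toReal_iff' (measure_ne_top _ _) (by finiteness)] at key

end

theorem inter_invariant_sets_indep_general {X : Type*} [MeasurableSpace X]
    (μ : Measure X) [IsProbabilityMeasure μ]
    (S T : X ≃ᵐ X) (hT : MeasurePreserving T μ μ)
    (hcomm : ∀ x, S (T x) = T (S x))
    (herg : ∀ s : Set X, MeasurableSet s → ⇑S ⁻¹' s = s → ⇑T ⁻¹' s = s → μ s = 0 ∨ μ s = 1)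
    (A B : Set X) (hA : MeasurableSet A) (hAinv : ⇑T ⁻¹' A = A)
    (hB : MeasurableSet B) (hBinv : ⇑S ⁻¹' B = B) :
    μ (A ∩ B) = μ A * μ B := by
  have hST : Function.Commute S T := hcomm
  have hm := invariants_le (S : X → X)
  have hTm : Measurable[invariants S, invariants S] T :=
    measurable_invariants_of_semiconj T.measurable hST.symm
  have hTm' : Measurable[invariants S, invariants S] T.symm :=
    measurable_invariants_of_semiconj T.symm.measurable
      (hST.symm.inverse_left T.left_inv T.right_inv)
  have hAT : A.indicator (1 : X → ℝ) ∘ T = A.indicator 1 := by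
    funext x
    rw [comp_apply, ← indicator_comp_right, hAinv, Pi.one_comp]
  have hint : Integrable (A.indicator (1 : X → ℝ)) μ := (integrable_const 1).indicator hA
  have hgT : μ[A.indicator (1 : X → ℝ) | invariants S] ∘ T =ᵐ[μ]
      μ[A.indicator 1 | invariants S] := by
    simpa only [hAT] using (hT.condExp_comp_ae_eq hm hTm hTm' hint).symm
  obtain ⟨c, hc⟩ := exists_ae_eq_const_of_ergodic_trim hm
    (ergodic_trim_invariants hT hST herg) stronglyMeasurable_condExp hgT
  exact measure_inter_eq_mul_of_condExp_indicator_ae_eq_const hm hA ⟨hB, hBinv⟩ hc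

/-- in an ergodic system with commuting transformations `S` and `T`,
a `T`-invariant set and an `S`-invariant set are independent. -/
theorem inter_invariant_sets_indep {X : Type*} [MeasurableSpace X]
    (μ : Measure X) [IsProbabilityMeasure μ]
    (S T : X ≃ᵐ X) (hS : MeasurePreserving S μ μ) (hT : MeasurePreserving T μ μ)
    (hcomm : ∀ x, S (T x) = T (S x))
    (herg : ∀ s : Set X, MeasurableSet s → ⇑S ⁻¹' s = s → ⇑T ⁻¹' s = s → μ s = 0 ∨ μ s = 1)
    (A B : Set X) (hA : MeasurableSet A) (hAinv : ⇑T ⁻¹' A = A)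
    (hB : MeasurableSet B) (hBinv : ⇑S ⁻¹' B = B) :
    μ (A ∩ B) = μ A * μ B :=
  inter_invariant_sets_indep_general μ S T hT hcomm herg A B hA hAinv hB hBinv
end

section
/- Let (X,S,T) be a strictly ergodic topological dynamical system with commuting homeomorphisms and unique invariant measure μ. Suppose there is a topological factor map π_W : X → W onto a strictly ergodic system (W,τ), where S acts on W as the identity and T acts as τ, such that π_W realizes the measurable factor of (X,μ,S,T) associated with the σ-algebra I_S of S-invariant sets. Then the system (Q_S(X), G_S) is uniquely ergodic, and its unique invariant measure is μ_S, the relatively independent self-joining of μ over I_S. -/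
/-!
By the pull-out property, `μ_S (A × B) = ∫ 1_A · E(1_B | I_S) dμ`, and by the mean ergodic
theorem `E(1_B | I_S)` is the `L¹`-limit of the Birkhoff averages of `1_B` under `S`. Hence `μ_S`
vanishes on every open rectangle `U × V` missed by all pairs `(x, Sⁿ x)`, i.e. it lives on
`Q_S(X)`; its invariance under `id × S`, `S × S` and `T × T` comes from the equivariance of
`E(· | I_S)` under measure-preserving maps commuting with `S`.

Conversely, let `ν` be a `G_S`-invariant measure on `Q_S(X)`. Both marginals of `ν` are `S`- and
`T`-invariant, hence equal to `μ`, and invariance under `id × S` gives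
`ν (A × B) = ∫ 1_A(x) A_N 1_B(y) dν → ∫ 1_A(x) E(1_B | I_S)(y) dν`. Since `E(1_B | I_S)` factors
through `π_W` and `π_W x = π_W y` on `Q_S(X)`, the limit is `∫ 1_A E(1_B | I_S) dμ = μ_S (A × B)`.
-/

open MeasureTheory Topology
open scoped symmDiff

/-- The dynamical pair cube `Q_S(X)`. -/
def pairQ {X : Type*} [TopologicalSpace X] (S : X ≃ₜ X) : Set (X × X) :=
  closure {p | ∃ (x : X) (i : ℤ), p = (x, (S.toEquiv ^ i) x)}

/-- The permutation `id × S` of `X²`. -/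
def side2 {X : Type*} (S : X ≃ X) : Equiv.Perm (X × X) :=
  (Equiv.refl X).prodCongr S

/-- The diagonal permutation `g × g` of `X²`. -/
def diag2 {X : Type*} (g : X ≃ X) : Equiv.Perm (X × X) :=
  g.prodCongr g

/-- The group `G_S` generated by `id×S` and `g×g` for `g` in the group generated by
`S` and `T`. -/
def GS {X : Type*} (S T : X ≃ X) : Subgroup (Equiv.Perm (X × X)) :=
  Subgroup.closure ({side2 S} ∪ {d | ∃ g ∈ Subgroup.closure {S, T}, d = diag2 g})

open Filter MeasurableSpace
open scoped ENNReal

-- `invSigma R` is definitionally `MeasurableSpace.invariants R`; the lemmas below use the latter.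

section CondExp

variable {X : Type*} {m m₀ : MeasurableSpace X} {μ : Measure X}

theorem integral_mul_condExp (hm : m ≤ m₀) [SigmaFinite (μ.trim hm)] {f g : X → ℝ}
    (hf : Integrable f μ) (hfg : Integrable (f * μ[g|m]) μ) :
    ∫ x, f x * μ[g|m] x ∂μ = ∫ x, μ[f|m] x * μ[g|m] x ∂μ :=
  (integral_condExp hm).symm.trans <| integral_congr_ae <|
    condExp_mul_of_stronglyMeasurable_right stronglyMeasurable_condExp hfg hf

theorem condExp_ae_eq_of_forall_exists_ae_eq {m₁ m₂ : MeasurableSpace X} (h₁₂ : m₁ ≤ m₂)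
    (h₂ : m₂ ≤ m₀) [SigmaFinite (μ.trim h₂)] [SigmaFinite (μ.trim (h₁₂.trans h₂))]
    (h : ∀ s, MeasurableSet[m₂] s → ∃ t, MeasurableSet[m₁] t ∧ s =ᵐ[μ] t)
    {g : X → ℝ} (hg : Integrable g μ) : μ[g|m₂] =ᵐ[μ] μ[g|m₁] := by
  refine (ae_eq_condExp_of_forall_setIntegral_eq h₂ hg
    (fun _ _ _ => integrable_condExp.integrableOn) (fun s hs _ => ?_)
    (stronglyMeasurable_condExp.mono h₁₂).aestronglyMeasurable).symm
  obtain ⟨t, ht, hst⟩ := h s hs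
  rw [setIntegral_congr_set hst, setIntegral_congr_set hst,
    setIntegral_condExp (h₁₂.trans h₂) hg ht]

end CondExp

theorem MeasureTheory.MeasurePreserving.integral_comp_of_aestronglyMeasurable {X Y : Type*}
    [MeasurableSpace X] [MeasurableSpace Y] {μ : Measure X} {ν : Measure Y} {R : X → Y}
    (hR : MeasurePreserving R μ ν) {f : Y → ℝ} (hf : AEStronglyMeasurable f ν) :
    ∫ x, f (R x) ∂μ = ∫ y, f y ∂ν := by
  rw [← hR.map_eq] at hf ⊢
  exact (integral_map hR.aemeasurable hf).symm

section Invariants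

variable {X : Type*} [MeasurableSpace X] {μ : Measure X} {S : X → X}

theorem aestronglyMeasurable_invariants_of_ae_comp_eq (hS : MeasurePreserving S μ μ)
    {f : X → ℝ} (hf : AEStronglyMeasurable f μ) (hfS : f ∘ S =ᵐ[μ] f) :
    AEStronglyMeasurable[invariants S] f μ := by
  obtain ⟨f₀, hf₀, hff₀⟩ := hf.aemeasurable
  have hf₀S : f₀ ∘ S =ᵐ[μ] f₀ :=
    (hS.quasiMeasurePreserving.ae_eq_comp hff₀.symm).trans (hfS.trans hff₀)
  have hiter : ∀ n, f₀ ∘ S^[n] =ᵐ[μ] f₀ := by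
    intro n
    induction n with
    | zero => rfl
    | succ n ih =>
      rw [Function.iterate_succ, ← Function.comp_assoc]
      exact (hS.quasiMeasurePreserving.ae_eq_comp ih).trans hf₀S
  -- the liminf along the orbit is an everywhere invariant version of `f₀`
  set v : X → ℝ := fun x => liminf (fun n => f₀ (S^[n] x)) atTop
  have hv : Measurable v := Measurable.liminf fun n => hf₀.comp (hS.measurable.iterate n)
  have hvS : v ∘ S = v := funext fun x => by
    simpa only [v, Function.comp_apply, ← Function.iterate_succ_apply]
      using liminf_nat_add (fun n => f₀ (S^[n] x)) 1
  refine ⟨v, (measurable_invariants_dom.2 ⟨hv, fun s _ => by rw [hvS]⟩).stronglyMeasurable, ?_⟩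
  filter_upwards [hff₀, ae_all_iff.2 hiter] with x hx hxS
  simp only [Function.comp_apply] at hxS
  simp only [v, hx, hxS, liminf_const]

theorem ae_eq_condExp_invariants_of_ae_comp_eq [IsFiniteMeasure μ]
    (hS : MeasurePreserving S μ μ) {f g : X → ℝ} (hf : Integrable f μ) (hg : Integrable g μ)
    (hfS : f ∘ S =ᵐ[μ] f)
    (hfg : ∀ s, MeasurableSet[invariants S] s → ∫ x in s, f x ∂μ = ∫ x in s, g x ∂μ) :
    f =ᵐ[μ] μ[g|invariants S] :=
  ae_eq_condExp_of_forall_setIntegral_eq (invariants_le S) hg (fun _ _ _ => hf.integrableOn)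
    (fun s hs _ => hfg s hs) (aestronglyMeasurable_invariants_of_ae_comp_eq hS hf.1 hfS)

theorem condExp_invariants_comp_self (f : X → ℝ) : μ[f|invariants S] ∘ S = μ[f|invariants S] :=
  comp_eq_of_measurable_invariants stronglyMeasurable_condExp.measurable

theorem condExp_invariants_comp_of_commute [IsFiniteMeasure μ] (e : X ≃ᵐ X)
    (he : MeasurePreserving e μ μ) (hcomm : Function.Commute e S) {f : X → ℝ}
    (hf : Integrable f μ) : μ[f ∘ e|invariants S] =ᵐ[μ] μ[f|invariants S] ∘ e := by
  have he_inv : Measurable[invariants S, invariants S] e :=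
    measurable_invariants_of_semiconj e.measurable hcomm
  have he_symm_inv : Measurable[invariants S, invariants S] e.symm :=
    measurable_invariants_of_semiconj e.symm.measurable
      (hcomm.inverse_left e.symm_apply_apply e.apply_symm_apply)
  refine (ae_eq_condExp_of_forall_setIntegral_eq (invariants_le S)
    (he.integrable_comp_of_integrable hf) (fun _ _ _ => ?_) (fun s hs _ => ?_)
    (stronglyMeasurable_condExp.comp_measurable he_inv).aestronglyMeasurable).symm
  · exact (he.integrable_comp_of_integrable integrable_condExp).integrableOn
  -- `s = e ⁻¹' t` with `t` invariant: move both integrals to `t`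
  set t := e.symm ⁻¹' s
  have hts : e ⁻¹' t = s := e.preimage_symm_preimage s
  rw [← hts, Function.comp_def, Function.comp_def,
    he.setIntegral_preimage_emb e.measurableEmbedding,
    he.setIntegral_preimage_emb e.measurableEmbedding,
    setIntegral_condExp (invariants_le S) hf (he_symm_inv hs)]

theorem integral_mul_condExp_invariants_snd [IsFiniteMeasure μ] {W : Type*} [MeasurableSpace W]
    {π : X → W} (hπ : Measurable π) (hπS : ∀ x, π (S x) = π x)
    (hfactor : ∀ A : Set X, MeasurableSet[invariants S] A →
      ∃ B : Set W, MeasurableSet B ∧ μ (A ∆ (π ⁻¹' B)) = 0)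
    {ν : Measure (X × X)} (hfst : MeasurePreserving Prod.fst ν μ)
    (hsnd : MeasurePreserving Prod.snd ν μ) (hν : ∀ᵐ p ∂ν, π p.1 = π p.2) {f g : X → ℝ}
    (hf : AEStronglyMeasurable f μ) (hg : Integrable g μ) :
    ∫ p, f p.1 * μ[g|invariants S] p.2 ∂ν = ∫ x, f x * μ[g|invariants S] x ∂μ := by
  have hm : MeasurableSpace.comap π ‹_› ≤ invariants S := by
    rintro _ ⟨B, hB, rfl⟩
    exact ⟨hπ hB, by ext x; simp [hπS]⟩
  have hE : μ[g|invariants S] =ᵐ[μ] μ[g|MeasurableSpace.comap π ‹_›] :=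
    condExp_ae_eq_of_forall_exists_ae_eq hm (invariants_le S) (fun s hs => by
      obtain ⟨B, hB, hsB⟩ := hfactor s hs
      exact ⟨π ⁻¹' B, ⟨B, hB, rfl⟩, measure_symmDiff_eq_zero_iff.1 hsB⟩) hg
  have hfib : (μ[g|MeasurableSpace.comap π ‹_›]).FactorsThrough π :=
    stronglyMeasurable_condExp.factorsThrough
  calc ∫ p, f p.1 * μ[g|invariants S] p.2 ∂ν
      = ∫ p, f p.1 * μ[g|MeasurableSpace.comap π ‹_›] p.1 ∂ν := by
        refine integral_congr_ae ?_
        filter_upwards [hsnd.quasiMeasurePreserving.ae_eq_comp hE, hν] with p hp hπp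
        rw [Function.comp_apply, Function.comp_apply] at hp
        rw [hp, hfib hπp.symm]
    _ = ∫ x, f x * μ[g|MeasurableSpace.comap π ‹_›] x ∂μ :=
        hfst.integral_comp_of_aestronglyMeasurable (f := fun x => f x * _) <| hf.mul
          (stronglyMeasurable_condExp.mono (hm.trans (invariants_le S))).aestronglyMeasurable
    _ = ∫ x, f x * μ[g|invariants S] x ∂μ :=
        integral_congr_ae (hE.mono fun x hx => congrArg (f x * ·) hx.symm)

end Invariants

section Birkhoff

variable {X : Type*} [MeasurableSpace X] {μ : Measure X} {S : X → X}

theorem integral_birkhoffAverage (hS : MeasurePreserving S μ μ) {g : X → ℝ}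
    (hg : Integrable g μ) {N : ℕ} (hN : N ≠ 0) :
    ∫ x, birkhoffAverage ℝ S g N x ∂μ = ∫ x, g x ∂μ := by
  have hterm : ∀ k, ∫ x, g (S^[k] x) ∂μ = ∫ x, g x ∂μ := fun k =>
    (hS.iterate k).integral_comp_of_aestronglyMeasurable hg.1
  simp only [birkhoffAverage, birkhoffSum]
  rw [integral_smul, integral_finsetSum (f := fun k x => g (S^[k] x)) _
      fun k _ => (hS.iterate k).integrable_comp_of_integrable hg,
    Finset.sum_congr rfl fun k _ => hterm k, Finset.sum_const, Finset.card_range, nsmul_eq_mul,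
    smul_eq_mul, inv_mul_cancel_left₀ (Nat.cast_ne_zero.2 hN)]

theorem coeFn_birkhoffAverage_compMeasurePreserving {p : ℝ≥0∞} [Fact (1 ≤ p)]
    (hS : MeasurePreserving S μ μ) {g : X → ℝ} (hg : MemLp g p μ) (N : ℕ) :
    ⇑(birkhoffAverage ℝ (Lp.compMeasurePreservingₗᵢ ℝ S hS) id N (hg.toLp g)) =ᵐ[μ]
      birkhoffAverage ℝ S g N := by
  have hiter : ∀ k, ⇑((Lp.compMeasurePreservingₗᵢ ℝ S hS)^[k] (hg.toLp g)) =ᵐ[μ] g ∘ S^[k] :=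
    fun k => by
      have : (Lp.compMeasurePreservingₗᵢ ℝ S hS : Lp ℝ p μ → Lp ℝ p μ)^[k] =
          Lp.compMeasurePreserving S^[k] (hS.iterate k) :=
        Lp.compMeasurePreserving_iterate hS k
      rw [this]
      exact (Lp.coeFn_compMeasurePreserving _ _).trans
        ((hS.iterate k).quasiMeasurePreserving.ae_eq_comp hg.coeFn_toLp)
  filter_upwards [Lp.coeFn_smul (N : ℝ)⁻¹ (birkhoffSum _ id N (hg.toLp g)),
    Lp.coeFn_finsetSum (Finset.range N) fun k => _^[k] (hg.toLp g),
    ae_all_iff.2 hiter] with x hsmul hsum hk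
  simp only [birkhoffAverage, birkhoffSum, id] at hsmul hsum ⊢
  rw [hsmul, Pi.smul_apply, hsum, Finset.sum_apply]
  simp only [hk, Function.comp_apply]

theorem tendsto_eLpNorm_of_exponent_le [IsProbabilityMeasure μ] {ι : Type*} {l : Filter ι}
    {p q : ℝ≥0∞} (hpq : p ≤ q) {f : ι → X → ℝ} (hf : ∀ i, AEStronglyMeasurable (f i) μ)
    (h : Tendsto (fun i => eLpNorm (f i) q μ) l (𝓝 0)) :
    Tendsto (fun i => eLpNorm (f i) p μ) l (𝓝 0) :=
  tendsto_of_tendsto_of_tendsto_of_le_of_le tendsto_const_nhds h (fun _ => zero_le)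
    fun i => eLpNorm_le_eLpNorm_of_exponent_le hpq (hf i)

theorem setIntegral_birkhoffAverage_of_measurableSet_invariants (hS : MeasurePreserving S μ μ)
    {g : X → ℝ} (hg : Integrable g μ) {s : Set X} (hs : MeasurableSet[invariants S] s) {N : ℕ}
    (hN : N ≠ 0) : ∫ x in s, birkhoffAverage ℝ S g N x ∂μ = ∫ x in s, g x ∂μ := by
  have hSs := hS.restrict_preimage hs.1
  rw [hs.2] at hSs
  exact integral_birkhoffAverage hSs hg.restrict hN

theorem tendsto_eLpNorm_birkhoffAverage_sub_condExp [IsProbabilityMeasure μ]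
    (hS : MeasurePreserving S μ μ) {g : X → ℝ} (hg : MemLp g 2 μ) :
    Tendsto (fun N => eLpNorm (birkhoffAverage ℝ S g N - μ[g|invariants S]) 2 μ) atTop (𝓝 0) := by
  set U := (Lp.compMeasurePreservingₗᵢ ℝ S hS : Lp ℝ 2 μ →ₗᵢ[ℝ] Lp ℝ 2 μ).toContinuousLinearMap
  set K := LinearMap.eqLocus (U : Lp ℝ 2 μ →ₗ[ℝ] Lp ℝ 2 μ) (1 : Lp ℝ 2 μ →L[ℝ] Lp ℝ 2 μ)
  set P : Lp ℝ 2 μ := ↑(K.orthogonalProjectionOnto (hg.toLp g))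
  have hA := coeFn_birkhoffAverage_compMeasurePreserving hS hg
  have hconv : Tendsto (fun N => eLpNorm (birkhoffAverage ℝ S g N - ⇑P) 2 μ) atTop (𝓝 0) :=
    ((Lp.tendsto_Lp_iff_tendsto_eLpNorm' _ _).1 <|
      U.tendsto_birkhoffAverage_orthogonalProjection
        (LinearIsometry.norm_toContinuousLinearMap_le _) _).congr
      fun N => eLpNorm_congr_ae ((hA N).sub EventuallyEq.rfl)
  have hP : ⇑P =ᵐ[μ] μ[g|invariants S] := by
    refine ae_eq_condExp_invariants_of_ae_comp_eq hS ((Lp.memLp P).integrable one_le_two)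
      (hg.integrable one_le_two) ?_ fun s hs => ?_
    · have hUP : U P = P := (K.orthogonalProjectionOnto (hg.toLp g)).2
      exact (Lp.coeFn_compMeasurePreserving P hS).symm.trans
        (by rw [show Lp.compMeasurePreserving S hS P = P from hUP])
    · have hL1 := tendsto_eLpNorm_of_exponent_le one_le_two
        (fun N => ((Lp.aestronglyMeasurable _).congr (hA N)).sub (Lp.aestronglyMeasurable P))
        hconv
      refine tendsto_nhds_unique (tendsto_setIntegral_of_L1' _ (Lp.aestronglyMeasurable P)
        (Eventually.of_forall fun N => ((Lp.memLp _).integrable one_le_two).congr (hA N)) hL1 s)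
        (tendsto_const_nhds.congr' ?_)
      filter_upwards [eventually_ne_atTop 0] with N hN
      exact (setIntegral_birkhoffAverage_of_measurableSet_invariants hS
        (hg.integrable one_le_two) hs hN).symm
  exact hconv.congr fun N => eLpNorm_congr_ae (EventuallyEq.rfl.sub hP)

theorem tendsto_integral_mul_birkhoffAverage_comp [IsProbabilityMeasure μ]
    (hS : MeasurePreserving S μ μ) {g : X → ℝ} (hg : MemLp g 2 μ) {Y : Type*}
    [MeasurableSpace Y] {κ : Measure Y} {q : Y → X} (hq : MeasurePreserving q κ μ) {F : Y → ℝ}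
    {C : ℝ} (hF : AEStronglyMeasurable F κ) (hFC : ∀ᵐ y ∂κ, ‖F y‖ ≤ C) :
    Tendsto (fun N => ∫ y, F y * birkhoffAverage ℝ S g N (q y) ∂κ) atTop
      (𝓝 (∫ y, F y * μ[g|invariants S] (q y) ∂κ)) := by
  have hA : ∀ N, Integrable (birkhoffAverage ℝ S g N) μ := fun N =>
    ((Lp.memLp _).integrable one_le_two).congr (coeFn_birkhoffAverage_compMeasurePreserving hS hg N)
  have hL1 := tendsto_eLpNorm_of_exponent_le one_le_two
    (fun N => (hA N).1.sub integrable_condExp.1) (tendsto_eLpNorm_birkhoffAverage_sub_condExp hS hg)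
  refine tendsto_integral_of_L1' _ (hF.mul (integrable_condExp.1.comp_measurePreserving hq))
    (Eventually.of_forall fun N => (hq.integrable_comp_of_integrable (hA N)).bdd_mul hF hFC) ?_
  refine tendsto_of_tendsto_of_tendsto_of_le_of_le tendsto_const_nhds
    (by simpa using ENNReal.Tendsto.const_mul hL1 (.inr ENNReal.ofReal_ne_top) (a := .ofReal C))
    (fun _ => zero_le) fun N => ?_
  rw [← eLpNorm_comp_measurePreserving ((hA N).1.sub integrable_condExp.1) hq]
  refine eLpNorm_le_mul_eLpNorm_of_ae_le_mul (hFC.mono fun y hy => ?_) 1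
  simp only [Pi.sub_apply, Pi.mul_apply, Function.comp_apply, ← mul_sub, norm_mul]
  exact mul_le_mul_of_nonneg_right hy (norm_nonneg _)

end Birkhoff

theorem birkhoffAverage_prodMap_id_indicator_prod {X Y : Type*} (R : Y → Y) (A : Set X)
    (B : Set Y) (N : ℕ) (p : X × Y) :
    birkhoffAverage ℝ (Prod.map id R) ((A ×ˢ B).indicator (1 : X × Y → ℝ)) N p =
      A.indicator 1 p.1 * birkhoffAverage ℝ R (B.indicator 1) N p.2 := by
  have hiter : ∀ k, (Prod.map id R)^[k] p = (p.1, R^[k] p.2) := fun k => by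
    rw [Prod.map_iterate, Function.iterate_id]
    rfl
  simp only [birkhoffAverage, birkhoffSum, hiter, Set.indicator_prod_one, ← Finset.mul_sum,
    smul_eq_mul]
  ring

theorem norm_indicator_one_le {X : Type*} (s : Set X) (x : X) :
    ‖s.indicator (1 : X → ℝ) x‖ ≤ 1 :=
  (norm_indicator_le_norm_self _ _).trans (by simp)

theorem indicator_one_preimage_eq_comp {X Y : Type*} (R : X → Y) (s : Set Y) :
    (R ⁻¹' s).indicator (1 : X → ℝ) = s.indicator 1 ∘ R :=
  funext fun _ => Set.indicator_comp_right (g := 1) R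

theorem comp_zpow_eq_of_comp_eq {X W : Type*} {e : Equiv.Perm X} {π : X → W} (h : π ∘ e = π)
    (i : ℤ) : π ∘ ⇑(e ^ i) = π := by
  have h' : π ∘ ⇑e⁻¹ = π := by
    conv_lhs => rw [← h]
    ext x
    simp
  obtain ⟨n, rfl | rfl⟩ := Int.eq_nat_or_neg i
  · rw [zpow_natCast, Equiv.Perm.coe_pow]
    exact Function.iterate_invariant h n
  · rw [zpow_neg, zpow_natCast, ← inv_pow, Equiv.Perm.coe_pow]
    exact Function.iterate_invariant h' n

theorem pairQ_subset_setOf_eq {X W : Type*} [TopologicalSpace X] [TopologicalSpace W]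
    [T2Space W] (S : X ≃ₜ X) {π : X → W} (hπ : Continuous π) (hπS : π ∘ S = π) :
    pairQ S ⊆ {p | π p.1 = π p.2} := by
  refine closure_minimal ?_ (isClosed_eq (hπ.comp continuous_fst) (hπ.comp continuous_snd))
  rintro _ ⟨x, i, rfl⟩
  exact (congrFun (comp_zpow_eq_of_comp_eq (e := S.toEquiv) hπS i) x).symm

namespace IsRelIndJoining

variable {X : Type*} [MeasurableSpace X] {μ : Measure X} [IsProbabilityMeasure μ] {S : X → X}
  {μS : Measure (X × X)}

theorem measureReal_prod (hμS : IsRelIndJoining μ S μS) {A B : Set X} (hA : MeasurableSet A)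
    (hB : MeasurableSet B) :
    μS.real (A ×ˢ B) = ∫ x, A.indicator 1 x * μ[B.indicator 1|invariants S] x ∂μ := by
  have hbdd : ∀ s : Set X, ∃ C, ∀ x, |s.indicator (1 : X → ℝ) x| ≤ C :=
    fun s => ⟨1, norm_indicator_one_le s⟩
  rw [← integral_indicator_one (hA.prod hB),
    integral_mul_condExp (invariants_le S) ((integrable_const 1).indicator hA)
      (integrable_condExp.bdd_mul (measurable_one.indicator hA).aestronglyMeasurable
        (ae_of_all _ (norm_indicator_one_le A)))]
  exact (integral_congr_ae (ae_of_all _ fun p => Set.indicator_prod_one)).trans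
    (hμS _ _ (measurable_one.indicator hA) (measurable_one.indicator hB) (hbdd A) (hbdd B))

theorem isProbabilityMeasure_s12 (hμS : IsRelIndJoining μ S μS) : IsProbabilityMeasure μS := by
  have h := hμS.measureReal_prod MeasurableSet.univ MeasurableSet.univ
  rw [Set.univ_prod_univ, Set.indicator_univ, Pi.one_def, condExp_const (invariants_le S)] at h
  simp only [mul_one, integral_const, probReal_univ, smul_eq_mul] at h
  exact ⟨(ENNReal.toReal_eq_one_iff _).1 h⟩

theorem measurePreserving_prodMap (hμS : IsRelIndJoining μ S μS) {R₁ R₂ : X → X}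
    (hR₁ : MeasurePreserving R₁ μ μ) (hR₂ : Measurable R₂)
    (h : ∀ f : X → ℝ, Integrable f μ → μ[f ∘ R₂|invariants S] =ᵐ[μ] μ[f|invariants S] ∘ R₁) :
    MeasurePreserving (Prod.map R₁ R₂) μS μS := by
  have := hμS.isProbabilityMeasure_s12
  have hR := hR₁.measurable.prodMap hR₂
  refine ⟨hR, Measure.ext_prod fun {A B} hA hB => ?_⟩
  rw [Measure.map_apply hR (hA.prod hB), Set.preimage_prod_map_prod,
    ← ENNReal.toReal_eq_toReal_iff' (measure_ne_top _ _) (measure_ne_top _ _)]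
  change μS.real _ = μS.real _
  rw [hμS.measureReal_prod (hR₁.measurable hA) (hR₂ hB), hμS.measureReal_prod hA hB,
    indicator_one_preimage_eq_comp, indicator_one_preimage_eq_comp]
  have hcond := h (B.indicator 1) ((integrable_const 1).indicator hB)
  calc ∫ x, (A.indicator 1 ∘ R₁) x * μ[B.indicator 1 ∘ R₂|invariants S] x ∂μ
      = ∫ x, A.indicator 1 (R₁ x) * μ[B.indicator 1|invariants S] (R₁ x) ∂μ :=
        integral_congr_ae (hcond.mono fun x hx => congrArg (A.indicator 1 (R₁ x) * ·) hx)
    _ = ∫ x, A.indicator 1 x * μ[B.indicator 1|invariants S] x ∂μ :=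
        hR₁.integral_comp_of_aestronglyMeasurable <|
          (measurable_one.indicator hA).aestronglyMeasurable.mul
            (stronglyMeasurable_condExp.mono (invariants_le S)).aestronglyMeasurable

theorem measure_prod_eq_zero (hμS : IsRelIndJoining μ S μS) (hS : MeasurePreserving S μ μ)
    {A B : Set X} (hA : MeasurableSet A) (hB : MeasurableSet B)
    (hAB : ∀ x ∈ A, ∀ n, S^[n] x ∉ B) : μS (A ×ˢ B) = 0 := by
  have := hμS.isProbabilityMeasure_s12
  have hlim := tendsto_integral_mul_birkhoffAverage_comp (g := B.indicator 1) hS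
    ((memLp_const 1).indicator hB)
    (MeasurePreserving.id μ) (measurable_one.indicator hA).aestronglyMeasurable
    (ae_of_all _ (norm_indicator_one_le A))
  have hzero : ∀ N x,
      A.indicator (1 : X → ℝ) x * birkhoffAverage ℝ S (B.indicator 1) N (id x) = 0 := by
    intro N x
    by_cases hx : x ∈ A
    · have hB : ∀ k ∈ Finset.range N, B.indicator (1 : X → ℝ) (S^[k] x) = 0 :=
        fun k _ => Set.indicator_of_notMem (hAB x hx k) 1
      simp [birkhoffAverage, birkhoffSum, Finset.sum_eq_zero hB]
    · simp [hx]
  rw [← measureReal_eq_zero_iff, hμS.measureReal_prod hA hB]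
  exact tendsto_nhds_unique hlim (by simp only [hzero, integral_zero]; exact tendsto_const_nhds)

theorem measure_compl_pairQ [TopologicalSpace X] [OpensMeasurableSpace X]
    [HereditarilyLindelofSpace (X × X)] {S : X ≃ₜ X} (hμS : IsRelIndJoining μ S μS)
    (hS : MeasurePreserving S μ μ) : μS (pairQ S)ᶜ = 0 := by
  refine measure_mono_null (Set.compl_subset_compl.2 fun p hp => ?_) μS.measure_compl_support
  by_contra hpQ
  obtain ⟨U, V, hU, hV, hpU, hpV, hUV⟩ :=
    isOpen_prod_iff.1 isClosed_closure.isOpen_compl p.1 p.2 hpQ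
  refine ((Measure.mem_support_iff_forall p).1 hp _
    (prod_mem_nhds (hU.mem_nhds hpU) (hV.mem_nhds hpV))).ne'
    (hμS.measure_prod_eq_zero hS hU.measurableSet hV.measurableSet fun x hx n hn => ?_)
  refine hUV (show (x, S^[n] x) ∈ U ×ˢ V from ⟨hx, hn⟩) (subset_closure ⟨x, n, ?_⟩)
  rw [zpow_natCast, Equiv.Perm.coe_pow]
  rfl

theorem eq_of_measurePreserving_prodMap_id {W : Type*} [MeasurableSpace W] {π : X → W}
    (hμS : IsRelIndJoining μ S μS) (hS : MeasurePreserving S μ μ) (hπ : Measurable π)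
    (hπS : ∀ x, π (S x) = π x)
    (hfactor : ∀ A : Set X, MeasurableSet[invariants S] A →
      ∃ B : Set W, MeasurableSet B ∧ μ (A ∆ (π ⁻¹' B)) = 0)
    {ν : Measure (X × X)} (hνS : MeasurePreserving (Prod.map id S) ν ν)
    (hfst : MeasurePreserving Prod.fst ν μ) (hsnd : MeasurePreserving Prod.snd ν μ)
    (hν : ∀ᵐ p ∂ν, π p.1 = π p.2) : ν = μS := by
  have : IsProbabilityMeasure ν :=
    ⟨by simpa using hfst.measure_preimage MeasurableSet.univ.nullMeasurableSet⟩
  have := hμS.isProbabilityMeasure_s12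
  refine Measure.ext_prod fun {A B} hA hB => ?_
  rw [← ENNReal.toReal_eq_toReal_iff' (measure_ne_top _ _) (measure_ne_top _ _)]
  change ν.real _ = μS.real _
  rw [hμS.measureReal_prod hA hB, ← integral_mul_condExp_invariants_snd (g := B.indicator 1) hπ
    hπS hfactor hfst hsnd hν (measurable_one.indicator hA).aestronglyMeasurable
    ((integrable_const 1).indicator hB)]
  -- the averages of `1_A(x) 1_B(S^n y)` all integrate to `ν (A × B)` by invariance of `ν`
  refine tendsto_nhds_unique (tendsto_const_nhds.congr' ?_)
    (tendsto_integral_mul_birkhoffAverage_comp (g := B.indicator 1) hS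
      ((memLp_const 1).indicator hB) hsnd
      ((measurable_one.indicator hA).comp measurable_fst).aestronglyMeasurable
      (ae_of_all _ fun p => norm_indicator_one_le A p.1))
  filter_upwards [eventually_ne_atTop 0] with N hN
  rw [← integral_indicator_one (hA.prod hB),
    ← integral_birkhoffAverage (g := (A ×ˢ B).indicator 1) hνS
      ((integrable_const 1).indicator (hA.prod hB)) hN]
  simp only [birkhoffAverage_prodMap_id_indicator_prod]

end IsRelIndJoining

def measurePreservingPerms {α : Type*} [MeasurableSpace α] (μ : Measure α) :
    Subgroup (Equiv.Perm α) where
  carrier := {g | MeasurePreserving g μ μ ∧ Measurable ⇑g⁻¹}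
  mul_mem' := fun ⟨hf, hf'⟩ ⟨hg, hg'⟩ => ⟨hf.comp hg, hg'.comp hf'⟩
  one_mem' := ⟨.id μ, measurable_id⟩
  inv_mem' := fun {g} ⟨hg, hg'⟩ =>
    ⟨MeasurePreserving.symm ⟨g, hg.measurable, hg'⟩ hg, by simpa using hg.measurable⟩

def diag2Hom (X : Type*) : Equiv.Perm X →* Equiv.Perm (X × X) where
  toFun := diag2
  map_one' := rfl
  map_mul' _ _ := rfl

theorem GS_le {X : Type*} {S T : Equiv.Perm X} {K : Subgroup (Equiv.Perm (X × X))}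
    (hside : side2 S ∈ K) (hS : diag2 S ∈ K) (hT : diag2 T ∈ K) : GS S T ≤ K := by
  have hdiag : Subgroup.closure {S, T} ≤ K.comap (diag2Hom X) :=
    (Subgroup.closure_le _).2 (Set.insert_subset_iff.2 ⟨hS, Set.singleton_subset_iff.2 hT⟩)
  refine (Subgroup.closure_le K).2 (Set.union_subset (Set.singleton_subset_iff.2 hside) ?_)
  rintro _ ⟨g, hg, rfl⟩
  exact hdiag hg

theorem side2_mem_GS {X : Type*} (S T : Equiv.Perm X) : side2 S ∈ GS S T :=
  Subgroup.subset_closure (Or.inl rfl)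

theorem diag2_mem_GS {X : Type*} {S T g : Equiv.Perm X} (hg : g ∈ ({S, T} : Set _)) :
    diag2 g ∈ GS S T :=
  Subgroup.subset_closure (Or.inr ⟨g, Subgroup.subset_closure hg, rfl⟩)

theorem measurePreserving_of_measure_preimage_eq {α : Type*} [MeasurableSpace α]
    {ν : Measure α} {g : α → α} (hg : Measurable g)
    (h : ∀ s, MeasurableSet s → ν (g ⁻¹' s) = ν s) : MeasurePreserving g ν ν :=
  ⟨hg, Measure.ext fun s hs => by rw [Measure.map_apply hg hs, h s hs]⟩

theorem IsRelIndJoining.GS_le_measurePreservingPerms {X : Type*} [TopologicalSpace X]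
    [MeasurableSpace X] [BorelSpace X] {μ : Measure X} [IsProbabilityMeasure μ] {S T : X ≃ₜ X}
    {μS : Measure (X × X)} (hμS : IsRelIndJoining μ S μS) (hS : MeasurePreserving S μ μ)
    (hT : MeasurePreserving T μ μ) (hcomm : Function.Commute T S) :
    GS S.toEquiv T.toEquiv ≤ measurePreservingPerms μS := by
  have hSS (f : X → ℝ) (hf : Integrable f μ) :
      μ[f ∘ S|invariants S] =ᵐ[μ] μ[f|invariants S] ∘ S :=
    condExp_invariants_comp_of_commute S.toMeasurableEquiv hS (Function.Commute.refl _) hf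
  have hTS (f : X → ℝ) (hf : Integrable f μ) :
      μ[f ∘ T|invariants S] =ᵐ[μ] μ[f|invariants S] ∘ T :=
    condExp_invariants_comp_of_commute T.toMeasurableEquiv hT hcomm hf
  refine GS_le ⟨hμS.measurePreserving_prodMap (.id μ) S.measurable fun f hf =>
      (hSS f hf).trans (by rw [condExp_invariants_comp_self]; rfl),
      measurable_id.prodMap S.symm.measurable⟩
    ⟨hμS.measurePreserving_prodMap hS S.measurable hSS,
      S.symm.measurable.prodMap S.symm.measurable⟩
    ⟨hμS.measurePreserving_prodMap hT T.measurable hTS,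
      T.symm.measurable.prodMap T.symm.measurable⟩

theorem pairCube_uniquely_ergodic_general
    {X : Type*} [MetricSpace X] [CompactSpace X] [MeasurableSpace X] [BorelSpace X]
    {W : Type*} [MetricSpace W] [MeasurableSpace W] [BorelSpace W]
    (S T : X ≃ₜ X) (hcomm : ∀ x, S (T x) = T (S x))
    (μ : Measure X) [IsProbabilityMeasure μ]
    -- (X,S,T) is strictly ergodic with unique invariant measure μ
    (hSinv : MeasurePreserving ⇑S μ μ) (hTinv : MeasurePreserving ⇑T μ μ)
    (huniq : ∀ ν : Measure X, IsProbabilityMeasure ν → MeasurePreserving ⇑S ν ν →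
      MeasurePreserving ⇑T ν ν → ν = μ)
    -- πW is a topological factor map on which S acts trivially and T acts as τ
    (πW : X → W) (hπcont : Continuous πW)
    (hπS : ∀ x, πW (S x) = πW x)
    -- πW realizes the measurable factor of (X,μ,S,T) associated with I_S
    (hfactor : ∀ A : Set X, MeasurableSet[invSigma ⇑S] A →
      ∃ B : Set W, MeasurableSet B ∧ μ (A ∆ (πW ⁻¹' B)) = 0)
    -- μ_S is the relatively independent self-joining of μ over I_S
    (μS : Measure (X × X)) (hμS : IsRelIndJoining μ ⇑S μS) :
    -- (Q_S(X), G_S) is uniquely ergodic with unique invariant measure μ_S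
    IsProbabilityMeasure μS ∧ μS (pairQ S)ᶜ = 0 ∧
    (∀ g ∈ GS S.toEquiv T.toEquiv, ∀ s : Set (X × X),
      MeasurableSet s → μS (⇑g ⁻¹' s) = μS s) ∧
    (∀ ν : Measure (X × X), IsProbabilityMeasure ν → ν (pairQ S)ᶜ = 0 →
      (∀ g ∈ GS S.toEquiv T.toEquiv, ∀ s : Set (X × X),
        MeasurableSet s → ν (⇑g ⁻¹' s) = ν s) →
      ν = μS) := by
  have hGS := hμS.GS_le_measurePreservingPerms hSinv hTinv fun x => (hcomm x).symm
  refine ⟨hμS.isProbabilityMeasure_s12, hμS.measure_compl_pairQ hSinv,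
    fun g hg s hs => (hGS hg).1.measure_preimage hs.nullMeasurableSet,
    fun ν hν hνQ hνinv => ?_⟩
  have hνmp (g) (hg : g ∈ GS S.toEquiv T.toEquiv) (hgc : Continuous g) :
      MeasurePreserving g ν ν :=
    measurePreserving_of_measure_preimage_eq hgc.measurable (hνinv g hg)
  have hmarg (q : X × X → X) (hq : Continuous q) (hqS : Function.Semiconj q (diag2 S.toEquiv) S)
      (hqT : Function.Semiconj q (diag2 T.toEquiv) T) : MeasurePreserving q ν μ :=
    ⟨hq.measurable, huniq _ (Measure.isProbabilityMeasure_map hq.aemeasurable)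
      (.of_semiconj ⟨hq.measurable, rfl⟩
        (hνmp _ (diag2_mem_GS (by simp)) (S.continuous.prodMap S.continuous)) hqS S.measurable)
      (.of_semiconj ⟨hq.measurable, rfl⟩
        (hνmp _ (diag2_mem_GS (by simp)) (T.continuous.prodMap T.continuous)) hqT T.measurable)⟩
  exact hμS.eq_of_measurePreserving_prodMap_id hSinv hπcont.measurable hπS hfactor
    (hνmp _ (side2_mem_GS _ _) (continuous_id.prodMap S.continuous))
    (hmarg Prod.fst continuous_fst (fun _ => rfl) fun _ => rfl)
    (hmarg Prod.snd continuous_snd (fun _ => rfl) fun _ => rfl)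
    (mem_of_superset (mem_ae_iff.2 hνQ) (pairQ_subset_setOf_eq S hπcont (funext hπS)))

/-- if the strictly ergodic system `(X,S,T)` admits a topological factor map
onto a strictly ergodic system `(W,τ)` (on which `S` acts trivially and `T` acts as `τ`)
realizing the measurable factor associated with `I_S`, then `(Q_S(X), G_S)` is uniquely
ergodic with unique invariant measure `μ_S`. -/
theorem pairCube_uniquely_ergodic
    {X : Type*} [MetricSpace X] [CompactSpace X] [MeasurableSpace X] [BorelSpace X]
    {W : Type*} [MetricSpace W] [CompactSpace W] [MeasurableSpace W] [BorelSpace W]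
    (S T : X ≃ₜ X) (hcomm : ∀ x, S (T x) = T (S x))
    (μ : Measure X) [IsProbabilityMeasure μ]
    -- (X,S,T) is strictly ergodic with unique invariant measure μ
    (hmin : ∀ x y : X, y ∈ closure {z | ∃ i j : ℤ, z = (S.toEquiv ^ i) ((T.toEquiv ^ j) x)})
    (hSinv : MeasurePreserving ⇑S μ μ) (hTinv : MeasurePreserving ⇑T μ μ)
    (huniq : ∀ ν : Measure X, IsProbabilityMeasure ν → MeasurePreserving ⇑S ν ν →
      MeasurePreserving ⇑T ν ν → ν = μ)
    -- (W,τ) is strictly ergodic with unique invariant measure ρW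
    (τ : W ≃ₜ W) (ρW : Measure W) [IsProbabilityMeasure ρW]
    (hWmin : ∀ w w' : W, w' ∈ closure {z | ∃ j : ℤ, z = (τ.toEquiv ^ j) w})
    (hτinv : MeasurePreserving ⇑τ ρW ρW)
    (hWuniq : ∀ ν : Measure W, IsProbabilityMeasure ν → MeasurePreserving ⇑τ ν ν → ν = ρW)
    -- πW is a topological factor map on which S acts trivially and T acts as τ
    (πW : X → W) (hπcont : Continuous πW) (hπsurj : Function.Surjective πW)
    (hπS : ∀ x, πW (S x) = πW x) (hπT : ∀ x, πW (T x) = τ (πW x))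
    -- πW realizes the measurable factor of (X,μ,S,T) associated with I_S
    (hfactor : ∀ A : Set X, MeasurableSet[invSigma ⇑S] A →
      ∃ B : Set W, MeasurableSet B ∧ μ (A ∆ (πW ⁻¹' B)) = 0)
    -- μ_S is the relatively independent self-joining of μ over I_S
    (μS : Measure (X × X)) (hμS : IsRelIndJoining μ ⇑S μS) :
    -- (Q_S(X), G_S) is uniquely ergodic with unique invariant measure μ_S
    IsProbabilityMeasure μS ∧ μS (pairQ S)ᶜ = 0 ∧
    (∀ g ∈ GS S.toEquiv T.toEquiv, ∀ s : Set (X × X),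
      MeasurableSet s → μS (⇑g ⁻¹' s) = μS s) ∧
    (∀ ν : Measure (X × X), IsProbabilityMeasure ν → ν (pairQ S)ᶜ = 0 →
      (∀ g ∈ GS S.toEquiv T.toEquiv, ∀ s : Set (X × X),
        MeasurableSet s → ν (⇑g ⁻¹' s) = ν s) →
      ν = μS) :=
  pairCube_uniquely_ergodic_general S T hcomm μ hSinv hTinv huniq πW hπcont hπS hfactor μS hμS
end

section
/- Let (X,μ,S,T) be a measure preserving system with commuting transformations S and T, and let f1, f2, f3 ∈ L∞(X) be real-valued with ‖f_i‖_∞ ≤ 1 for i = 1,2,3. Then there exists a universal constant C (independent of the system, the functions, x and N) such that for every x ∈ X and every N ∈ ℕ, ((1/N²) Σ_{i=0}^{N-1} Σ_{j=0}^{N-1} f1(S^i x) f2(T^j x) f3(S^i T^j x))⁴ ≤ C · |S_N(f3, x)|, where S_N(f,x) = |(1/N⁴) Σ_{(i,j,k,p) ∈ A_N} f(S^i T^j x) f(S^{i+k} T^j x) f(S^i T^{j+p} x) f(S^{i+k} T^{j+p} x)| and A_N = {(i,j,k,p) ∈ ℤ⁴ : i,j ∈ [0,N−1], k ∈ [−i,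 N−1−i], p ∈ [−j, N−1−j]}. -/
open MeasureTheory

universe u

private lemma reindex_icc (N i : ℕ) (g : ℤ → ℝ) :
    ∑ k ∈ Finset.Icc (-(i:ℤ)) ((N:ℤ) - 1 - i), g ((i:ℤ) + k) = ∑ m ∈ Finset.range N, g m := by
  apply Finset.sum_nbij' (fun k => ((i:ℤ) + k).toNat) (fun m => (m:ℤ) - i)
  · intro k hk; simp only [Finset.mem_Icc] at hk; simp only [Finset.mem_range]; omega
  · intro m hm; simp only [Finset.mem_range] at hm; simp only [Finset.mem_Icc]; omega
  · intro k hk; simp only [Finset.mem_Icc] at hk; omega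
  · intro m hm; simp only [Finset.mem_range] at hm; omega
  · intro k hk; simp only [Finset.mem_Icc] at hk; congr 1; omega

/-- there is a universal constant `C` (independent of the system, the
functions, the point and `N`) bounding the fourth power of the cubic average by
`C · |S_N(f3, x)|`. -/
theorem universal_bound_cubic_average :
    ∃ C : ℝ, ∀ (X : Type u) (_ : MeasurableSpace X) (μ : Measure X),
      IsProbabilityMeasure μ →
      ∀ (S T : X ≃ᵐ X), MeasurePreserving ⇑S μ μ → MeasurePreserving ⇑T μ μ →
      (∀ x, S (T x) = T (S x)) →
      ∀ (f1 f2 f3 : X → ℝ), Measurable f1 → Measurable f2 → Measurable f3 →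
      (∀ x, |f1 x| ≤ 1) → (∀ x, |f2 x| ≤ 1) → (∀ x, |f3 x| ≤ 1) →
      ∀ (x : X) (N : ℕ),
        (((N : ℝ) ^ 2)⁻¹ * ∑ i ∈ Finset.range N, ∑ j ∈ Finset.range N,
            f1 ((⇑S)^[i] x) * f2 ((⇑T)^[j] x) * f3 ((⇑S)^[i] ((⇑T)^[j] x))) ^ 4 ≤
        C * |((N : ℝ) ^ 4)⁻¹ * ∑ i ∈ Finset.range N, ∑ j ∈ Finset.range N,
            ∑ k ∈ Finset.Icc (-(i : ℤ)) ((N : ℤ) - 1 - i),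
              ∑ p ∈ Finset.Icc (-(j : ℤ)) ((N : ℤ) - 1 - j),
                f3 ((S.toEquiv ^ (i : ℤ)) ((T.toEquiv ^ (j : ℤ)) x)) *
                f3 ((S.toEquiv ^ ((i : ℤ) + k)) ((T.toEquiv ^ (j : ℤ)) x)) *
                f3 ((S.toEquiv ^ (i : ℤ)) ((T.toEquiv ^ ((j : ℤ) + p)) x)) *
                f3 ((S.toEquiv ^ ((i : ℤ) + k)) ((T.toEquiv ^ ((j : ℤ) + p)) x))| := by
  refine ⟨1, ?_⟩
  intro X _ μ _ S T _ _ _ f1 f2 f3 _ _ _ hf1 hf2 hf3 x N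
  set u : ℕ → ℕ → ℝ := fun i j => f3 ((⇑S)^[i] ((⇑T)^[j] x)) with hu
  set a : ℕ → ℝ := fun i => f1 ((⇑S)^[i] x) with ha
  set b : ℕ → ℝ := fun j => f2 ((⇑T)^[j] x) with hb
  have hz : ∀ (E : X ≃ᵐ X) (n : ℕ) (y : X), (E.toEquiv ^ (n : ℤ)) y = (⇑E)^[n] y := by
    intro E n y
    rw [zpow_natCast]
    induction n generalizing y with
    | zero => simp
    | succ n ih =>
      rw [pow_succ, Equiv.Perm.mul_apply, Function.iterate_succ_apply]
      exact ih (E y)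
  -- rewrite the quadruple sum
  have key : (∑ i ∈ Finset.range N, ∑ j ∈ Finset.range N,
      ∑ k ∈ Finset.Icc (-(i : ℤ)) ((N : ℤ) - 1 - i),
        ∑ p ∈ Finset.Icc (-(j : ℤ)) ((N : ℤ) - 1 - j),
          f3 ((S.toEquiv ^ (i : ℤ)) ((T.toEquiv ^ (j : ℤ)) x)) *
          f3 ((S.toEquiv ^ ((i : ℤ) + k)) ((T.toEquiv ^ (j : ℤ)) x)) *
          f3 ((S.toEquiv ^ (i : ℤ)) ((T.toEquiv ^ ((j : ℤ) + p)) x)) *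
          f3 ((S.toEquiv ^ ((i : ℤ) + k)) ((T.toEquiv ^ ((j : ℤ) + p)) x))) =
      ∑ i ∈ Finset.range N, ∑ j ∈ Finset.range N, ∑ i' ∈ Finset.range N, ∑ j' ∈ Finset.range N,
        u i j * u i' j * u i j' * u i' j' := by
    refine Finset.sum_congr rfl fun i _ => Finset.sum_congr rfl fun j _ => ?_
    calc (∑ k ∈ Finset.Icc (-(i : ℤ)) ((N : ℤ) - 1 - i),
          ∑ p ∈ Finset.Icc (-(j : ℤ)) ((N : ℤ) - 1 - j),
            f3 ((S.toEquiv ^ (i : ℤ)) ((T.toEquiv ^ (j : ℤ)) x)) *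
            f3 ((S.toEquiv ^ ((i : ℤ) + k)) ((T.toEquiv ^ (j : ℤ)) x)) *
            f3 ((S.toEquiv ^ (i : ℤ)) ((T.toEquiv ^ ((j : ℤ) + p)) x)) *
            f3 ((S.toEquiv ^ ((i : ℤ) + k)) ((T.toEquiv ^ ((j : ℤ) + p)) x)))
        = ∑ i' ∈ Finset.range N,
            ∑ p ∈ Finset.Icc (-(j : ℤ)) ((N : ℤ) - 1 - j),
              f3 ((S.toEquiv ^ (i : ℤ)) ((T.toEquiv ^ (j : ℤ)) x)) *
              f3 ((S.toEquiv ^ (i' : ℤ)) ((T.toEquiv ^ (j : ℤ)) x)) *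
              f3 ((S.toEquiv ^ (i : ℤ)) ((T.toEquiv ^ ((j : ℤ) + p)) x)) *
              f3 ((S.toEquiv ^ (i' : ℤ)) ((T.toEquiv ^ ((j : ℤ) + p)) x)) :=
          reindex_icc N i (fun ik =>
            ∑ p ∈ Finset.Icc (-(j : ℤ)) ((N : ℤ) - 1 - j),
              f3 ((S.toEquiv ^ (i : ℤ)) ((T.toEquiv ^ (j : ℤ)) x)) *
              f3 ((S.toEquiv ^ ik) ((T.toEquiv ^ (j : ℤ)) x)) *
              f3 ((S.toEquiv ^ (i : ℤ)) ((T.toEquiv ^ ((j : ℤ) + p)) x)) *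
              f3 ((S.toEquiv ^ ik) ((T.toEquiv ^ ((j : ℤ) + p)) x)))
      _ = ∑ i' ∈ Finset.range N, ∑ j' ∈ Finset.range N,
              f3 ((S.toEquiv ^ (i : ℤ)) ((T.toEquiv ^ (j : ℤ)) x)) *
              f3 ((S.toEquiv ^ (i' : ℤ)) ((T.toEquiv ^ (j : ℤ)) x)) *
              f3 ((S.toEquiv ^ (i : ℤ)) ((T.toEquiv ^ (j' : ℤ)) x)) *
              f3 ((S.toEquiv ^ (i' : ℤ)) ((T.toEquiv ^ (j' : ℤ)) x)) :=
          Finset.sum_congr rfl fun i' _ =>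
            reindex_icc N j (fun jp =>
              f3 ((S.toEquiv ^ (i : ℤ)) ((T.toEquiv ^ (j : ℤ)) x)) *
              f3 ((S.toEquiv ^ (i' : ℤ)) ((T.toEquiv ^ (j : ℤ)) x)) *
              f3 ((S.toEquiv ^ (i : ℤ)) ((T.toEquiv ^ jp) x)) *
              f3 ((S.toEquiv ^ (i' : ℤ)) ((T.toEquiv ^ jp) x)))
      _ = _ := by
          refine Finset.sum_congr rfl fun i' _ => Finset.sum_congr rfl fun j' _ => ?_
          simp only [hz, hu]
  rw [key]
  -- the reindexed quadruple sum is a sum of squares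
  set d : ℕ → ℕ → ℝ := fun j j' => ∑ i ∈ Finset.range N, u i j * u i j' with hd
  have hQ : (∑ i ∈ Finset.range N, ∑ j ∈ Finset.range N, ∑ i' ∈ Finset.range N,
      ∑ j' ∈ Finset.range N, u i j * u i' j * u i j' * u i' j') =
      ∑ j ∈ Finset.range N, ∑ j' ∈ Finset.range N, (d j j') ^ 2 := by
    rw [Finset.sum_comm]
    refine Finset.sum_congr rfl fun j _ => ?_
    have : ∀ i ∈ Finset.range N, (∑ i' ∈ Finset.range N, ∑ j' ∈ Finset.range N,
        u i j * u i' j * u i j' * u i' j') =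
        ∑ j' ∈ Finset.range N, ∑ i' ∈ Finset.range N, u i j * u i' j * u i j' * u i' j' :=
      fun i _ => by rw [Finset.sum_comm]
    rw [Finset.sum_congr rfl this, Finset.sum_comm]
    refine Finset.sum_congr rfl fun j' _ => ?_
    rw [hd, sq, Finset.sum_mul_sum]
    refine Finset.sum_congr rfl fun i _ => Finset.sum_congr rfl fun i' _ => by ring
  rw [hQ]
  set Q : ℝ := ∑ j ∈ Finset.range N, ∑ j' ∈ Finset.range N, (d j j') ^ 2 with hQdef
  have hQ0 : 0 ≤ Q := Finset.sum_nonneg fun j _ => Finset.sum_nonneg fun j' _ => sq_nonneg _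
  rcases Nat.eq_zero_or_pos N with hN | hN
  · subst hN
    simp [hQdef]
  have hNR : (0:ℝ) < N := by exact_mod_cast hN
  rw [one_mul, abs_of_nonneg (by positivity)]
  -- Cauchy-Schwarz steps
  set c : ℕ → ℝ := fun i => ∑ j ∈ Finset.range N, b j * u i j with hc
  have hterm : ∀ i j, f1 ((⇑S)^[i] x) * f2 ((⇑T)^[j] x) * f3 ((⇑S)^[i] ((⇑T)^[j] x)) =
      a i * (b j * u i j) := fun i j => by rw [ha, hb, hu]; ring
  have hP : (∑ i ∈ Finset.range N, ∑ j ∈ Finset.range N,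
      f1 ((⇑S)^[i] x) * f2 ((⇑T)^[j] x) * f3 ((⇑S)^[i] ((⇑T)^[j] x))) =
      ∑ i ∈ Finset.range N, a i * c i := by
    refine Finset.sum_congr rfl fun i _ => ?_
    rw [hc, Finset.mul_sum]
    exact Finset.sum_congr rfl fun j _ => hterm i j
  rw [hP]
  set P : ℝ := ∑ i ∈ Finset.range N, a i * c i with hPdef
  -- CS 1 : P^2 ≤ N * ∑ c i ^2
  have hsq1 : ∀ (f : ℕ → ℝ), (∀ y, |f y| ≤ 1) → ∀ i, f i ^ 2 ≤ 1 := by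
    intro f hf i
    calc f i ^ 2 = |f i| ^ 2 := (sq_abs _).symm
    _ ≤ 1 := by nlinarith [hf i, abs_nonneg (f i)]
  have cs1 : P ^ 2 ≤ (N:ℝ) * ∑ i ∈ Finset.range N, c i ^ 2 := by
    refine (Finset.sum_mul_sq_le_sq_mul_sq _ a c).trans ?_
    refine mul_le_mul_of_nonneg_right ?_ (Finset.sum_nonneg fun i _ => sq_nonneg _)
    calc ∑ i ∈ Finset.range N, a i ^ 2 ≤ ∑ i ∈ Finset.range N, (1:ℝ) :=
          Finset.sum_le_sum fun i _ => hsq1 a (fun y => hf1 _) i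
    _ = N := by simp
  -- ∑ c i ^2 = ∑_{(j,j')} (b j * b j') * d j j'
  have hc2 : (∑ i ∈ Finset.range N, c i ^ 2) =
      ∑ q ∈ Finset.range N ×ˢ Finset.range N, (b q.1 * b q.2) * d q.1 q.2 := by
    have h1 : ∀ i ∈ Finset.range N, c i ^ 2 =
        ∑ q ∈ Finset.range N ×ˢ Finset.range N, (b q.1 * b q.2) * (u i q.1 * u i q.2) := by
      intro i _
      rw [hc, sq, Finset.sum_mul_sum, Finset.sum_product]
      exact Finset.sum_congr rfl fun j _ => Finset.sum_congr rfl fun j' _ => by ring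
    rw [Finset.sum_congr rfl h1, Finset.sum_comm]
    refine Finset.sum_congr rfl fun q _ => ?_
    rw [hd, Finset.mul_sum]
  -- CS 2
  have cs2 : (∑ i ∈ Finset.range N, c i ^ 2) ^ 2 ≤ (N:ℝ)^2 * Q := by
    rw [hc2]
    refine (Finset.sum_mul_sq_le_sq_mul_sq _ (fun q : ℕ × ℕ => b q.1 * b q.2)
      (fun q : ℕ × ℕ => d q.1 q.2)).trans ?_
    have e1 : (∑ q ∈ Finset.range N ×ˢ Finset.range N, (b q.1 * b q.2) ^ 2) ≤ (N:ℝ)^2 := by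
      calc (∑ q ∈ Finset.range N ×ˢ Finset.range N, (b q.1 * b q.2) ^ 2)
          ≤ ∑ _q ∈ Finset.range N ×ˢ Finset.range N, (1:ℝ) := by
            refine Finset.sum_le_sum fun q _ => ?_
            rw [mul_pow]
            calc b q.1 ^2 * b q.2 ^2 ≤ 1 * 1 := by
                  refine mul_le_mul (hsq1 b (fun y => hf2 _) _) (hsq1 b (fun y => hf2 _) _)
                    (sq_nonneg _) zero_le_one
            _ = 1 := one_mul 1
      _ = (N:ℝ)^2 := by simp [sq]
    have e2 : (∑ q ∈ Finset.range N ×ˢ Finset.range N, d q.1 q.2 ^ 2) = Q := by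
      rw [hQdef, Finset.sum_product]
    rw [e2]
    exact mul_le_mul_of_nonneg_right e1 hQ0
  -- combine
  have hc2nn : 0 ≤ (N:ℝ) * ∑ i ∈ Finset.range N, c i ^ 2 := by
    positivity
  have h4 : P ^ 4 ≤ (N:ℝ)^4 * Q := by
    calc P ^ 4 = (P ^ 2) ^ 2 := by ring
    _ ≤ ((N:ℝ) * ∑ i ∈ Finset.range N, c i ^ 2) ^ 2 := by
        exact pow_le_pow_left₀ (sq_nonneg _) cs1 2
    _ = (N:ℝ)^2 * (∑ i ∈ Finset.range N, c i ^ 2) ^ 2 := by ring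
    _ ≤ (N:ℝ)^2 * ((N:ℝ)^2 * Q) := mul_le_mul_of_nonneg_left cs2 (by positivity)
    _ = (N:ℝ)^4 * Q := by ring
  calc (((N : ℝ) ^ 2)⁻¹ * P) ^ 4 = ((N:ℝ)^8)⁻¹ * P ^ 4 := by
        rw [mul_pow, inv_pow, ← pow_mul]
  _ ≤ ((N:ℝ)^8)⁻¹ * ((N:ℝ)^4 * Q) := by
        exact mul_le_mul_of_nonneg_left h4 (by positivity)
  _ = ((N:ℝ)^4)⁻¹ * Q := by
        field_simp
end
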